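/- Let A be a commutative Poisson algebra over ℝ and x : A → ℝ a ring homomorphism. Then the ideal I_x := {a ∈ A : ∃ d ∈ A, x(d) ≠ 0 and a·d = 0} is a Poisson ideal: for every a ∈ I_x and b ∈ A, {a, b} ∈ I_x. -/
import Mathlib


/-- For a commutative Poisson algebra `A` over ℝ and a unital ℝ-algebra homomorphism
`x : A → ℝ`, the ideal `I_x = {a | ∃ d, x d ≠ 0 ∧ a * d = 0}` is a Poisson ideal:
`{a, b} ∈ I_x` for every `a ∈ I_x` and `b ∈ A`. -/
theorem Ix_is_poisson_ideal
    (A : Type*) [CommRing A] [Algebra ℝ A]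
    (B : A → A → A)
    (haddl : ∀ a b c : A, B (a + b) c = B a c + B b c)
    (hsmull : ∀ (r : ℝ) (a c : A), B (r • a) c = r • B a c)
    (hskew : ∀ a b : A, B a b = - B b a)
    (hjacobi : ∀ a b c : A, B a (B b c) = B (B a b) c + B b (B a c))
    (hleib : ∀ a b c : A, B a (b * c) = B a b * c + b * B a c)
    (x : A →ₐ[ℝ] ℝ) :
    ∀ a ∈ {a : A | ∃ d : A, x d ≠ 0 ∧ a * d = 0}, ∀ b : A,
      B a b ∈ {a : A | ∃ d : A, x d ≠ 0 ∧ a * d = 0} := by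
  rintro a ⟨d, hxd, had⟩ b
  refine ⟨d * d, ?_, ?_⟩
  · simp only [map_mul]
    exact mul_ne_zero hxd hxd
  · have h1 : B b (a * d) = B b a * d + a * B b d := hleib b a d
    rw [had] at h1
    have h0 : B b 0 = 0 := by
      have := hleib b 0 0
      simpa using this
    rw [h0] at h1
    -- 0 = B b a * d + a * B b d ; multiply by d
    have h2 : (B b a * d + a * B b d) * d = 0 := by rw [← h1]; ring
    have h3 : B b a * (d * d) = 0 := by
      linear_combination h2 - B b d * had
    rw [hskew a b]
    linear_combination -h3
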